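/- Let k ≥ 2 and n ≥ 1, set N = k^n, let ζ ∈ ℂ be a primitive N-th root of unity, and consider the map f on (n+1)-tuples (x_0, ..., x_n) ∈ ℂ^{n+1} given by f(x_0,...,x_n) = (x_0, ζ x_1, ζ^2 x_2, ..., ζ^n x_n). Suppose (x_0,...,x_n) is not identically zero, satisfies x_0^N + ... + x_n^N = 0, and is a projective fixed point of the m-th iterate of f for some m ≥ 1, i.e. there exists λ ∈ ℂ^* with ζ^{im} x_i = λ x_i for all i. Then m ≥ N/n. -/

import Mathlib

/-- Minimal period bound for the diagonal map on Fermat hypersurfaces: if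
`x ≠ 0` lies on `x₀^N + ⋯ + xₙ^N = 0` with `N = kⁿ`, and `x` is a projective
fixed point of the `m`-th iterate of `(x₀,…,xₙ) ↦ (x₀, ζx₁, …, ζⁿxₙ)`,
then `m ≥ N/n`. -/
theorem fermat_diagonal_min_period (k n m : ℕ) (hk : 2 ≤ k) (hn : 1 ≤ n) (hm : 1 ≤ m)
    (N : ℕ) (hN : N = k ^ n)
    (ζ : ℂ) (hζ : IsPrimitiveRoot ζ N)
    (x : Fin (n + 1) → ℂ) (hx : x ≠ 0)
    (hsum : ∑ i, (x i) ^ N = 0)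
    (hfix : ∃ lam : ℂ, lam ≠ 0 ∧ ∀ i : Fin (n + 1), ζ ^ ((i : ℕ) * m) * x i = lam * x i) :
    (N : ℝ) / n ≤ (m : ℝ) := by
  obtain ⟨lam, hlam, hfx⟩ := hfix
  obtain ⟨i, hi⟩ := Function.ne_iff.mp hx
  simp only [Pi.zero_apply] at hi
  -- there is a second nonzero coordinate
  have hj : ∃ j : Fin (n + 1), j ≠ i ∧ x j ≠ 0 := by
    by_contra h
    push_neg at h
    have : ∑ t, (x t) ^ N = (x i) ^ N := by
      refine Finset.sum_eq_single i (fun t _ ht => ?_) (by simp)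
      rcases eq_or_ne (x t) 0 with h0 | h0
      · simp [h0, hN.symm ▸ (by positivity : 0 < k ^ n).ne']
      · exact absurd (h t ht) h0
    rw [this] at hsum
    exact hi (pow_eq_zero_iff (hN ▸ (by positivity : 0 < k ^ n)).ne' |>.mp hsum)
  obtain ⟨j, hji, hj⟩ := hj
  -- pick ordered pair a < b with nonzero coordinates
  obtain ⟨a, b, hab, ha, hb⟩ : ∃ a b : Fin (n + 1), a < b ∧ x a ≠ 0 ∧ x b ≠ 0 := by
    rcases lt_or_gt_of_ne hji with h | h
    · exact ⟨j, i, h, hj, hi⟩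
    · exact ⟨i, j, h, hi, hj⟩
  have hea : ζ ^ ((a : ℕ) * m) = lam := by
    have := hfx a
    field_simp at this
    exact mul_right_cancel₀ ha (hfx a)
  have heb : ζ ^ ((b : ℕ) * m) = lam := by
    have := hfx b
    field_simp at this
    exact mul_right_cancel₀ hb (hfx b)
  have hNpos : 0 < N := hN ▸ (by positivity)
  have hζ0 : ζ ≠ 0 := hζ.ne_zero hNpos.ne'
  have hone : ζ ^ (((b : ℕ) - a) * m) = 1 := by
    have hba : (b : ℕ) = a + ((b : ℕ) - a) := by omega
    have : ζ ^ ((a : ℕ) * m) * ζ ^ (((b : ℕ) - a) * m) = ζ ^ ((a : ℕ) * m) * 1 := by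
      rw [mul_one, ← pow_add, ← Nat.add_mul, ← hba, heb, hea]
    exact mul_left_cancel₀ (pow_ne_zero _ hζ0) this
  have hdvd : N ∣ ((b : ℕ) - a) * m := hζ.dvd_of_pow_eq_one _ hone
  have hle : N ≤ ((b : ℕ) - a) * m :=
    Nat.le_of_dvd (by
      have : 0 < (b : ℕ) - a := by omega
      positivity) hdvd
  have hbn : (b : ℕ) - a ≤ n := by omega
  have : N ≤ n * m := le_trans hle (Nat.mul_le_mul_right m hbn)
  rw [div_le_iff₀ (by positivity)]
  calc (N : ℝ) ≤ (n * m : ℕ) := by exact_mod_cast this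
    _ = (m : ℝ) * n := by push_cast; ring
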